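/- Let n ≥ 2, let C, D ∈ ℝ^{n×n} be symmetric, and fix V ∈ ℝ^{n×(n−1)} with Vᵀ·1 = 0 and Vᵀ V = I_{n−1}; write Ĉ := Vᵀ C V and D̂ := Vᵀ D V. Define OGW_lb(C,D) := (1/n²)·[ ‖C‖_F² + ‖D‖_F² − 2·Σ_{i=1}^{n−1} λᵢ↓(Ĉ)·λᵢ↓(D̂) − (4/n)·‖Vᵀ C 1‖·‖Vᵀ D 1‖ − (2/n²)·(1ᵀ C 1)(1ᵀ D 1) ]. Then OGW_lb(C,D) = (1/n²)·[ Σ_{i=1}^{n−1} (λᵢ↓(Ĉ) − λᵢ↓(D̂))² + (2/n)·(‖Vᵀ C 1‖ − ‖Vᵀ D 1‖)² + (1/n²)·(1ᵀ C 1 − 1ᵀ D 1)² ]. In other words, OGW_lb equals the squared Euclidean distance between the feature vectors (λ₁↓(Ĉ)/n, …, λ_{n−1}↓(Ĉ)/n, √2·‖Vᵀ C 1‖/(n√n), 1ᵀ C 1/n²) of the two matrices. -/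

import Mathlib

open Matrix BigOperators

noncomputable section

/-- Squared Frobenius norm of a real matrix. -/
def frobSq {m n : ℕ} (A : Matrix (Fin m) (Fin n) ℝ) : ℝ := ∑ i, ∑ j, (A i j) ^ 2

/-- Euclidean norm of a real vector. -/
def vnorm {n : ℕ} (v : Fin n → ℝ) : ℝ := Real.sqrt (∑ i, (v i) ^ 2)

/-- Eigenvalues of a real symmetric (Hermitian) matrix, listed in descending order. -/
def eigDesc {n : ℕ} {A : Matrix (Fin n) (Fin n) ℝ} (hA : A.IsHermitian) : Fin n → ℝ :=
  fun i => (hA.eigenvalues ∘ Tuple.sort hA.eigenvalues) i.rev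

/-- Conjugating a real symmetric (Hermitian) matrix preserves symmetry. -/
theorem conjHerm {n m : ℕ} (V : Matrix (Fin n) (Fin m) ℝ) {C : Matrix (Fin n) (Fin n) ℝ}
    (hC : C.IsHermitian) : (Vᵀ * C * V).IsHermitian := by
  have h := Matrix.isHermitian_mul_mul_conjTranspose Vᵀ hC
  simpa using h


/-- The closed-form lower bound `OGW_lb` of the orthogonal Gromov-Wasserstein discrepancy. -/
def OGWlb {n : ℕ} (V : Matrix (Fin n) (Fin (n - 1)) ℝ)
    (C D : Matrix (Fin n) (Fin n) ℝ) (hC : C.IsHermitian) (hD : D.IsHermitian) : ℝ :=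
  (1 / (n : ℝ) ^ 2) * (frobSq C + frobSq D
    - 2 * ∑ i, eigDesc (conjHerm V hC) i * eigDesc (conjHerm V hD) i
    - (4 / (n : ℝ)) * vnorm ((Vᵀ * C) *ᵥ (fun _ => (1 : ℝ)))
        * vnorm ((Vᵀ * D) *ᵥ (fun _ => (1 : ℝ)))
    - (2 / (n : ℝ) ^ 2) * ((∑ i, ∑ j, C i j) * (∑ i, ∑ j, D i j)))

/-!
Completing `V` by the column `1/√n` gives an orthogonal matrix, i.e. `V Vᵀ + 1 1ᵀ / n = I`.
Applying this Parseval identity to the columns and then to the rows of a symmetric `C` splits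
`‖C‖_F² = ‖Ĉ‖_F² + (2/n) ‖Vᵀ C 1‖² + (1ᵀ C 1)² / n²`, and `‖Ĉ‖_F²` is the sum of the squared
eigenvalues of `Ĉ`. Substituted into `OGW_lb`, each of the three groups of terms completes a square.
-/

lemma frobSq_eq_trace_transpose_mul {m n : ℕ} (M : Matrix (Fin m) (Fin n) ℝ) :
    frobSq M = (Mᵀ * M).trace := by
  simp only [frobSq, trace, diag, mul_apply, transpose_apply, sq]
  exact Finset.sum_comm

lemma frobSq_transpose {m n : ℕ} (M : Matrix (Fin m) (Fin n) ℝ) : frobSq Mᵀ = frobSq M :=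
  Finset.sum_comm

lemma Matrix.IsHermitian.trace_mul_self_eq_sum_eigenvalues_sq {ι : Type*} [Fintype ι]
    [DecidableEq ι] {A : Matrix ι ι ℝ} (hA : A.IsHermitian) :
    (A * A).trace = ∑ i, hA.eigenvalues i ^ 2 := by
  conv_lhs => rw [hA.spectral_theorem, ← map_mul, Unitary.conjStarAlgAut_apply, trace_mul_cycle,
    Unitary.coe_star_mul_self, one_mul]
  simp [diagonal_mul_diagonal, trace_diagonal, sq]

lemma frobSq_eq_sum_eigDesc_sq {n : ℕ} {A : Matrix (Fin n) (Fin n) ℝ} (hA : A.IsHermitian) :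
    frobSq A = ∑ i, eigDesc hA i ^ 2 := by
  have hAt : Aᵀ = A := by simpa using hA.eq
  rw [frobSq_eq_trace_transpose_mul, hAt, hA.trace_mul_self_eq_sum_eigenvalues_sq]
  exact ((Fin.revPerm.trans (Tuple.sort hA.eigenvalues)).sum_comp (hA.eigenvalues · ^ 2)).symm

section OrthonormalComplement

variable {n : ℕ} {V : Matrix (Fin n) (Fin (n - 1)) ℝ}

lemma mul_transpose_add_vecMulVec_eq_one (hV1 : Vᵀ *ᵥ (fun _ => (1 : ℝ)) = 0)
    (hV2 : Vᵀ * V = 1) : V * Vᵀ + vecMulVec (fun _ => (n : ℝ)⁻¹) (fun _ => 1) = 1 := by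
  rcases Nat.eq_zero_or_pos n with rfl | hn
  · exact Subsingleton.elim _ _
  set u : Matrix (Fin n) (Fin 1) ℝ := Matrix.of fun _ _ => (n : ℝ)⁻¹
  set w : Matrix (Fin 1) (Fin n) ℝ := Matrix.of fun _ _ => 1
  have hsum : ∀ j, ∑ i, V i j = 0 := fun j => by simpa [mulVec, dotProduct] using congrFun hV1 j
  have h1 : fromRows Vᵀ w * fromCols V u = 1 := by
    rw [fromRows_mul_fromCols, hV2, ← fromBlocks_one]
    congr 1 <;> ext i j
    · simp [u, mul_apply, ← Finset.sum_mul, hsum i]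
    · simp [w, mul_apply, hsum j]
    · obtain rfl := Subsingleton.elim i j
      simp [w, u, mul_apply, hn.ne']
  -- `[V | u]` is square, so its left inverse `[Vᵀ ; w]` is also a right inverse.
  have e : Fin (n - 1) ⊕ Fin 1 ≃ Fin n := finSumFinEquiv.trans (finCongr (by omega))
  have h2 := (mul_eq_one_comm_of_equiv e).mp h1
  rw [fromCols_mul_fromRows] at h2
  convert h2 using 2
  ext i j
  simp [u, w, vecMulVec_apply, mul_apply]

lemma sum_sq_eq_sum_sq_transpose_mulVec_add (hV1 : Vᵀ *ᵥ (fun _ => (1 : ℝ)) = 0)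
    (hV2 : Vᵀ * V = 1) (x : Fin n → ℝ) :
    ∑ i, x i ^ 2 = ∑ k, (Vᵀ *ᵥ x) k ^ 2 + (∑ i, x i) ^ 2 / n := by
  have hVx : x ᵥ* V = Vᵀ *ᵥ x := by rw [← vecMul_transpose Vᵀ, transpose_transpose]
  calc ∑ i, x i ^ 2
      = x ⬝ᵥ ((V * Vᵀ + vecMulVec (fun _ => (n : ℝ)⁻¹) (fun _ => 1)) *ᵥ x) := by
        rw [mul_transpose_add_vecMulVec_eq_one hV1 hV2, one_mulVec]
        simp only [dotProduct, sq]
    _ = (Vᵀ *ᵥ x) ⬝ᵥ (Vᵀ *ᵥ x) + (n : ℝ)⁻¹ * (∑ i, x i) * (∑ i, x i) := by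
        rw [add_mulVec, dotProduct_add, ← mulVec_mulVec, dotProduct_mulVec, hVx,
          vecMulVec_mulVec]
        simp only [dotProduct, Pi.smul_apply, MulOpposite.smul_eq_mul_unop,
          MulOpposite.unop_op, one_mul, ← Finset.sum_mul]
        ring
    _ = ∑ k, (Vᵀ *ᵥ x) k ^ 2 + (∑ i, x i) ^ 2 / n := by
        simp only [dotProduct, sq]
        ring

lemma frobSq_eq_frobSq_transpose_mul_add {p : ℕ} (hV1 : Vᵀ *ᵥ (fun _ => (1 : ℝ)) = 0)
    (hV2 : Vᵀ * V = 1) (M : Matrix (Fin n) (Fin p) ℝ) :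
    frobSq M = frobSq (Vᵀ * M) + (∑ j, ((fun _ => (1 : ℝ)) ᵥ* M) j ^ 2) / n := by
  rw [Finset.sum_div, ← frobSq_transpose M, ← frobSq_transpose (Vᵀ * M), frobSq, frobSq,
    ← Finset.sum_add_distrib]
  refine Finset.sum_congr rfl fun j _ => ?_
  have hcol : ((fun _ => (1 : ℝ)) ᵥ* M) j = ∑ i, M i j := by
    simp [vecMul, dotProduct]
  rw [hcol]
  exact sum_sq_eq_sum_sq_transpose_mulVec_add hV1 hV2 (fun i => M i j)

lemma frobSq_eq_frobSq_conj_add (hV1 : Vᵀ *ᵥ (fun _ => (1 : ℝ)) = 0) (hV2 : Vᵀ * V = 1)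
    {C : Matrix (Fin n) (Fin n) ℝ} (hC : C.IsHermitian) :
    frobSq C = frobSq (Vᵀ * C * V) + 2 / n * ∑ k, ((Vᵀ * C) *ᵥ (fun _ => (1 : ℝ))) k ^ 2
      + (∑ i, ∑ j, C i j) ^ 2 / n ^ 2 := by
  have hCt : Cᵀ = C := by simpa using hC.eq
  have hrow : (fun _ => (1 : ℝ)) ᵥ* C = C *ᵥ (fun _ => 1) := by
    rw [← vecMul_transpose, hCt]
  have hrowV : (fun _ => (1 : ℝ)) ᵥ* (C * V) = (Vᵀ * C) *ᵥ (fun _ => 1) := by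
    rw [← vecMul_vecMul, hrow, ← mulVec_mulVec, ← vecMul_transpose Vᵀ, transpose_transpose]
  have htot : ∑ i, (C *ᵥ (fun _ => (1 : ℝ))) i = ∑ i, ∑ j, C i j := by
    simp [mulVec, dotProduct]
  have hVC : frobSq (Vᵀ * C) = frobSq (C * V) := by
    rw [← frobSq_transpose, transpose_mul, transpose_transpose, hCt]
  rw [frobSq_eq_frobSq_transpose_mul_add hV1 hV2 C, hVC,
    frobSq_eq_frobSq_transpose_mul_add hV1 hV2 (C * V), hrowV, hrow,
    sum_sq_eq_sum_sq_transpose_mulVec_add hV1 hV2, mulVec_mulVec, htot, Matrix.mul_assoc]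
  ring

end OrthonormalComplement

lemma vnorm_sq {k : ℕ} (v : Fin k → ℝ) : vnorm v ^ 2 = ∑ i, v i ^ 2 :=
  Real.sq_sqrt (Finset.sum_nonneg fun i _ => sq_nonneg (v i))

lemma sum_sub_sq {k : ℕ} (a b : Fin k → ℝ) :
    ∑ i, (a i - b i) ^ 2 = ∑ i, a i ^ 2 + ∑ i, b i ^ 2 - 2 * ∑ i, a i * b i := by
  simp only [sub_sq, Finset.sum_add_distrib, Finset.sum_sub_distrib, Finset.mul_sum, mul_assoc]
  abel

/-- `OGW_lb` equals the squared Euclidean distance between spectral feature vectors. -/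
theorem OGWlb_as_feature_distance (n : ℕ)
    (C D : Matrix (Fin n) (Fin n) ℝ) (hC : C.IsHermitian) (hD : D.IsHermitian)
    (V : Matrix (Fin n) (Fin (n - 1)) ℝ)
    (hV1 : Vᵀ *ᵥ (fun _ => (1 : ℝ)) = 0) (hV2 : Vᵀ * V = 1) :
    OGWlb V C D hC hD
      = (1 / (n : ℝ) ^ 2) * (
          (∑ i, (eigDesc (conjHerm V hC) i - eigDesc (conjHerm V hD) i) ^ 2)
          + (2 / (n : ℝ)) * (vnorm ((Vᵀ * C) *ᵥ (fun _ => (1 : ℝ)))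
              - vnorm ((Vᵀ * D) *ᵥ (fun _ => (1 : ℝ)))) ^ 2
          + (1 / (n : ℝ) ^ 2) * ((∑ i, ∑ j, C i j) - (∑ i, ∑ j, D i j)) ^ 2) := by
  rw [OGWlb, frobSq_eq_frobSq_conj_add hV1 hV2 hC, frobSq_eq_frobSq_conj_add hV1 hV2 hD,
    frobSq_eq_sum_eigDesc_sq (conjHerm V hC), frobSq_eq_sum_eigDesc_sq (conjHerm V hD),
    sum_sub_sq, ← vnorm_sq ((Vᵀ * C) *ᵥ _), ← vnorm_sq ((Vᵀ * D) *ᵥ _)]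
  ring

end
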